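/- arXiv:2008.08646 — 2 statements merged into one kernel-verified Lean document; each statement's English description precedes it below -/
import Mathlib

section
/- If G⃗₁ and G⃗₂ are orientations of the same simple graph G, then |th(G⃗₁) − th(G⃗₂)| ≤ ⌊|E(G)|/2⌋. -/
open Set

/-- One time step of standard zero forcing on a digraph with arc relation `A`:
every blue vertex having a unique white out-neighbor forces it blue. -/
def dstep {V : Type*} (A : V → V → Prop) (S : Set V) : Set V :=
  S ∪ {w | ∃ u ∈ S, A u w ∧ ∀ x, A u x → x ∉ S → x = w}

/-- `B` is a zero forcing set of the digraph with arc relation `A`. -/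
def IsZFS {V : Type*} (A : V → V → Prop) (B : Set V) : Prop :=
  ∃ t, (dstep A)^[t] B = Set.univ

/-- Propagation time of `B` in the digraph with arc relation `A`. -/
noncomputable def dpt {V : Type*} (A : V → V → Prop) (B : Set V) : ℕ :=
  sInf {t | (dstep A)^[t] B = Set.univ}

/-- The throttling number of the digraph with arc relation `A`. -/
noncomputable def dth {V : Type*} (A : V → V → Prop) : ℕ :=
  sInf {k | ∃ B : Set V, IsZFS A B ∧ k = B.ncard + dpt A B}

/-- `A` is an orientation of the simple graph `G`: every arc lies on an edge of `G`,
and each edge of `G` gets exactly one direction. -/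
def IsOrientation {V : Type*} (G : SimpleGraph V) (A : V → V → Prop) : Prop :=
  (∀ u v, A u v → G.Adj u v) ∧ ∀ u v, G.Adj u v → (A u v ↔ ¬ A v u)


/-!
Reversing every arc does not change the throttling number: list the forces from a set `B` in
chronological order; the vertices that never force are as many as `B`, and in the transposed
digraph they force the same chains backwards, in reversed order of time. Changing the arcs on a
set `D` of pairs costs at most `|D|` extra initially blue vertices: for each changed pair, start
with whichever endpoint turns blue later. Two orientations of `G` differ on some `d` edges, while
the transpose of the first differs from the second on the other `|E(G)| - d`, and one of these
two numbers is at most `|E(G)| / 2`.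
-/

open Function

section ZeroForcing

variable {V : Type*} {A A' : V → V → Prop} {B : Set V} {t : ℕ}

lemma monotone_iterate_dstep (A : V → V → Prop) (B : Set V) :
    Monotone fun n => (dstep A)^[n] B :=
  fun _ _ h => monotone_iterate_of_id_le (fun _ => subset_union_left) h B

lemma subset_iterate_dstep (A : V → V → Prop) (B : Set V) (n : ℕ) : B ⊆ (dstep A)^[n] B :=
  monotone_iterate_dstep A B n.zero_le

lemma dth_le_dth_add_of_forall {k : ℕ}
    (h : ∀ B t, (dstep A)^[t] B = univ →
      ∃ B' : Set V, B'.ncard ≤ B.ncard + k ∧ (dstep A')^[t] B' = univ) :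
    dth A' ≤ dth A + k := by
  obtain ⟨B, hB, hdth⟩ : ∃ B, IsZFS A B ∧ dth A = B.ncard + dpt A B :=
    Nat.sInf_mem (s := {k | ∃ B, IsZFS A B ∧ k = B.ncard + dpt A B}) ⟨_, univ, ⟨0, rfl⟩, rfl⟩
  obtain ⟨B', hcard, hB'⟩ := h B _ (Nat.sInf_mem hB)
  have hdth' : dth A' ≤ B'.ncard + dpt A' B' := Nat.sInf_le ⟨B', ⟨_, hB'⟩, rfl⟩
  have hdpt : dpt A' B' ≤ dpt A B := Nat.sInf_le hB'
  omega

/-- The first time at which `x` turns blue when forcing from `B`. -/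
noncomputable def arrival (A : V → V → Prop) (B : Set V) (x : V) : ℕ :=
  sInf {r | x ∈ (dstep A)^[r] B}

lemma arrival_le_iff (hB : IsZFS A B) {x : V} {r : ℕ} :
    arrival A B x ≤ r ↔ x ∈ (dstep A)^[r] B := by
  refine ⟨fun h => monotone_iterate_dstep A B h (Nat.sInf_mem (s := {r | x ∈ (dstep A)^[r] B}) ?_),
    fun h => Nat.sInf_le h⟩
  obtain ⟨t, ht⟩ := hB
  exact ⟨t, by simp [ht]⟩

/-- `p x` forces `x` for every `x ∉ R`, where `σ` gives the times: `p x` is blue before `x`,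
and every other out-neighbour of `p x` is blue before `x` too. -/
def IsForcingMap (A : V → V → Prop) (R : Set V) (σ : V → ℕ) (p : V → V) : Prop :=
  ∀ x ∉ R, A (p x) x ∧ σ (p x) < σ x ∧ ∀ y, A (p x) y → y ≠ x → σ y < σ x

lemma exists_isForcingMap (ht : (dstep A)^[t] B = univ) :
    ∃ τ p, IsForcingMap A B τ p ∧ ∀ x, τ x ≤ t := by
  have hB : IsZFS A B := ⟨t, ht⟩
  have hforce : ∀ x ∉ B, ∃ z, A z x ∧ arrival A B z < arrival A B x ∧
      ∀ y, A z y → y ≠ x → arrival A B y < arrival A B x := by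
    intro x hx
    obtain ⟨m, hm⟩ : ∃ m, arrival A B x = m + 1 :=
      Nat.exists_eq_add_one.mpr (Nat.pos_of_ne_zero fun h => hx (by
        simpa using (arrival_le_iff hB (r := 0)).mp h.le))
    have hxm : x ∉ (dstep A)^[m] B := fun h => by have := (arrival_le_iff hB).mpr h; omega
    have hxm' : x ∈ dstep A ((dstep A)^[m] B) := by
      rw [← iterate_succ_apply' (dstep A)]; exact (arrival_le_iff hB).mp hm.le
    obtain ⟨z, hz, hzx, hzuniq⟩ := hxm'.resolve_left hxm
    refine ⟨z, hzx, by have := (arrival_le_iff hB).mpr hz; omega, fun y hzy hyx => ?_⟩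
    by_contra hy
    exact hyx (hzuniq y hzy fun h => hy (by have := (arrival_le_iff hB).mpr h; omega))
  choose! p hp using hforce
  exact ⟨arrival A B, p, hp, fun x => (arrival_le_iff hB).mpr (by simp [ht])⟩

namespace IsForcingMap

variable {R : Set V} {σ τ : V → ℕ} {p : V → V}

lemma injOn (hp : IsForcingMap A R σ p) : InjOn p Rᶜ := by
  intro x hx y hy hxy
  by_contra hne
  have hyx := (hp x hx).2.2 y (hxy ▸ (hp y hy).1) (Ne.symm hne)
  have hxy' := (hp y hy).2.2 x (hxy ▸ (hp x hx).1) hne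
  omega

lemma mem_iterate (hp : IsForcingMap A R σ p) (x : V) : x ∈ (dstep A)^[σ x] R := by
  induction hσ : σ x using Nat.strong_induction_on generalizing x with
  | _ n ih =>
    subst hσ
    by_cases hx : x ∈ R
    · exact subset_iterate_dstep A R _ hx
    obtain ⟨hpx, hlt, hother⟩ := hp x hx
    obtain ⟨m, hm⟩ : ∃ m, σ x = m + 1 := Nat.exists_eq_add_one.mpr (by omega)
    have hblue : ∀ y, σ y < σ x → y ∈ (dstep A)^[m] R := fun y hy =>
      monotone_iterate_dstep A R (by omega) (ih _ hy y rfl)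
    rw [hm, iterate_succ_apply']
    exact Or.inr ⟨p x, hblue _ hlt, hpx, fun y hy hyR => by_contra fun hyx =>
      hyR (hblue y (hother y hy hyx))⟩

lemma iterate_eq_univ (hp : IsForcingMap A R σ p) (hσ : ∀ x, σ x ≤ t) :
    (dstep A)^[t] R = univ :=
  eq_univ_of_forall fun x => monotone_iterate_dstep A R (hσ x) (hp.mem_iterate x)

lemma exists_flip (hp : IsForcingMap A R τ p) (hτ : ∀ x, τ x ≤ t) :
    ∃ σ q, IsForcingMap (flip A) (p '' Rᶜ)ᶜ σ q ∧ ∀ x, σ x ≤ t := by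
  choose! q hqR hpq using fun x (hx : x ∈ p '' Rᶜ) => hx
  have hτpos : ∀ y ∉ R, 0 < τ y := fun y hy => by have := (hp y hy).2.1; omega
  -- `q x` is the vertex that `x` forces; time runs backwards from `t + 1`
  set σ := (p '' Rᶜ).indicator fun x => t + 1 - τ (q x) with hσ
  have hσ_lt : ∀ z y, (z ∈ p '' Rᶜ → τ y < τ (q z)) → σ z < t + 1 - τ y := by
    intro z y h
    by_cases hz : z ∈ p '' Rᶜ
    · rw [hσ, indicator_of_mem hz]
      have := h hz
      have := hτ (q z)
      omega
    · rw [hσ, indicator_of_notMem hz]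
      have := hτ y
      omega
  refine ⟨σ, q, fun x hx => ?_, fun x => ?_⟩
  · rw [notMem_compl_iff] at hx
    have hpqx := hpq x hx
    obtain ⟨hforce, -, hother⟩ := hp (q x) (hqR x hx)
    rw [hpqx] at hforce hother
    rw [hσ, indicator_of_mem hx]
    refine ⟨hforce, hσ_lt _ _ fun hq => ?_, fun z hz hzx => hσ_lt _ _ fun hz' => ?_⟩
    · simpa only [hpq _ hq] using (hp _ (hqR _ hq)).2.1
    · refine (hp _ (hqR z hz')).2.2 _ (by rwa [hpq z hz']) fun h => hzx ?_
      rw [← hpq z hz', ← h, hpqx]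
  · by_cases hx : x ∈ p '' Rᶜ
    · rw [hσ, indicator_of_mem hx]
      have := hτpos _ (hqR x hx)
      omega
    · rw [hσ, indicator_of_notMem hx]
      exact t.zero_le

end IsForcingMap

lemma dth_flip_le [Finite V] (A : V → V → Prop) : dth (flip A) ≤ dth A := by
  refine (dth_le_dth_add_of_forall (k := 0) fun B t ht => ?_).trans_eq (add_zero _)
  obtain ⟨τ, p, hp, hτ⟩ := exists_isForcingMap ht
  obtain ⟨σ, q, hq, hσ⟩ := hp.exists_flip hτ
  refine ⟨(p '' Bᶜ)ᶜ, ?_, hq.iterate_eq_univ hσ⟩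
  have := ncard_add_ncard_compl (p '' Bᶜ)
  have := ncard_add_ncard_compl B
  have := hp.injOn.ncard_image
  omega

lemma dth_flip [Finite V] (A : V → V → Prop) : dth (flip A) = dth A :=
  (dth_flip_le A).antisymm (dth_flip_le (flip A))

def arcDiff (A A' : V → V → Prop) : Set (Sym2 V) :=
  {e | ∃ a b, e = s(a, b) ∧ ¬(A a b ↔ A' a b)}

lemma mk_mem_arcDiff {a b : V} :
    s(a, b) ∈ arcDiff A A' ↔ ¬(A a b ↔ A' a b) ∨ ¬(A b a ↔ A' b a) := by
  constructor
  · rintro ⟨x, y, hxy, h⟩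
    rcases Sym2.eq_iff.mp hxy with ⟨rfl, rfl⟩ | ⟨rfl, rfl⟩
    · exact Or.inl h
    · exact Or.inr h
  · rintro (h | h)
    · exact ⟨a, b, rfl, h⟩
    · exact ⟨b, a, Sym2.eq_swap, h⟩

lemma Sym2.exists_mem_forall_le {α β : Type*} [LinearOrder β] (f : α → β) (e : Sym2 α) :
    ∃ x ∈ e, ∀ y ∈ e, f y ≤ f x := by
  induction e using Sym2.ind with
  | _ a b =>
    rcases le_total (f a) (f b) with h | h
    · refine ⟨b, Sym2.mem_mk_right a b, fun y hy => ?_⟩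
      rcases Sym2.mem_iff.mp hy with rfl | rfl <;> simp [h]
    · refine ⟨a, Sym2.mem_mk_left a b, fun y hy => ?_⟩
      rcases Sym2.mem_iff.mp hy with rfl | rfl <;> simp [h]

lemma IsForcingMap.exists_of_arcDiff [Finite V] {R : Set V} {τ : V → ℕ} {p : V → V}
    (hp : IsForcingMap A R τ p) (A' : V → V → Prop) :
    ∃ C : Set V, C.ncard ≤ (arcDiff A A').ncard ∧
      ∃ σ, IsForcingMap A' (R ∪ C) σ p ∧ ∀ x, σ x ≤ τ x := by
  choose later hmem hmax using Sym2.exists_mem_forall_le τ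
  set C := later '' arcDiff A A'
  -- `C` holds the later endpoint of every pair on which `A` and `A'` differ
  have hdiff : ∀ z y, ¬(A z y ↔ A' z y) → y ∈ C ∨ τ y ≤ τ z := by
    intro z y h
    rcases Sym2.mem_iff.mp (hmem s(z, y)) with hz | hy
    · exact Or.inr (hz ▸ hmax s(z, y) y (Sym2.mem_mk_right z y))
    · exact Or.inl ⟨_, ⟨z, y, rfl, h⟩, hy⟩
  have hσle : ∀ y, Cᶜ.indicator τ y ≤ τ y := indicator_le_self Cᶜ τ
  refine ⟨C, ncard_image_le, Cᶜ.indicator τ, fun x hx => ?_, hσle⟩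
  rw [mem_union, not_or] at hx
  obtain ⟨hpx, hlt, hother⟩ := hp x hx.1
  have hσx : Cᶜ.indicator τ x = τ x := indicator_of_mem hx.2 τ
  rw [hσx]
  refine ⟨?_, (hσle _).trans_lt hlt, fun y hy hyx => ?_⟩
  · by_contra h
    rcases hdiff _ _ fun hiff => h (hiff.mp hpx) with hxC | hle
    · exact hx.2 hxC
    · omega
  · by_cases hA : A (p x) y
    · exact (hσle y).trans_lt (hother y hA hyx)
    rcases hdiff _ _ fun hiff => hA (hiff.mpr hy) with hyC | hle
    · rw [indicator_of_notMem (notMem_compl_iff.mpr hyC)]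
      omega
    · exact (hσle y).trans_lt (hle.trans_lt hlt)

theorem dth_le_dth_add_ncard_arcDiff [Finite V] (A A' : V → V → Prop) :
    dth A' ≤ dth A + (arcDiff A A').ncard :=
  dth_le_dth_add_of_forall fun B t ht => by
    obtain ⟨τ, p, hp, hτ⟩ := exists_isForcingMap ht
    obtain ⟨C, hC, σ, hσ, hστ⟩ := hp.exists_of_arcDiff A'
    exact ⟨B ∪ C, (ncard_union_le B C).trans (by omega),
      hσ.iterate_eq_univ fun x => (hστ x).trans (hτ x)⟩

end ZeroForcing

namespace IsOrientation

variable {V : Type*} {G : SimpleGraph V} {A A' : V → V → Prop}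

lemma arcDiff_subset_edgeSet (hA : IsOrientation G A) (hA' : IsOrientation G A') :
    arcDiff A A' ⊆ G.edgeSet := by
  rintro _ ⟨a, b, rfl, h⟩
  by_contra hab
  exact h (iff_of_false (fun h' => hab (hA.1 a b h')) fun h' => hab (hA'.1 a b h'))

lemma arcDiff_flip (hA : IsOrientation G A) (hA' : IsOrientation G A') :
    arcDiff A (flip A') = G.edgeSet \ arcDiff A A' := by
  ext e
  induction e using Sym2.ind with
  | _ a b =>
    simp only [mem_sdiff, mk_mem_arcDiff, SimpleGraph.mem_edgeSet, flip]
    have := hA.1 a b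
    have := hA.1 b a
    have := hA'.1 a b
    have := hA'.1 b a
    by_cases hab : G.Adj a b
    · have := hA.2 a b hab
      have := hA'.2 a b hab
      tauto
    · tauto

lemma ncard_arcDiff_add_ncard_arcDiff_flip [Finite V] (hA : IsOrientation G A)
    (hA' : IsOrientation G A') :
    (arcDiff A A').ncard + (arcDiff A (flip A')).ncard = G.edgeSet.ncard := by
  rw [hA.arcDiff_flip hA', add_comm]
  exact ncard_sdiff_add_ncard_of_subset (hA.arcDiff_subset_edgeSet hA')

theorem dth_le_dth_add_ncard_edgeSet_div_two [Finite V] {A₁ A₂ : V → V → Prop}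
    (h₁ : IsOrientation G A₁) (h₂ : IsOrientation G A₂) :
    dth A₁ ≤ dth A₂ + G.edgeSet.ncard / 2 := by
  have hdiff := dth_le_dth_add_ncard_arcDiff A₂ A₁
  have hflip := dth_le_dth_add_ncard_arcDiff A₂ (flip A₁)
  rw [dth_flip] at hflip
  have := h₂.ncard_arcDiff_add_ncard_arcDiff_flip h₁
  omega

end IsOrientation

/-- The throttling numbers of two orientations of the same graph differ by at most
`⌊|E(G)|/2⌋`. -/
theorem stmt13 {V : Type*} [Fintype V] (G : SimpleGraph V)
    (A₁ A₂ : V → V → Prop) (h₁ : IsOrientation G A₁) (h₂ : IsOrientation G A₂) :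
    dth A₁ ≤ dth A₂ + G.edgeSet.ncard / 2 ∧
    dth A₂ ≤ dth A₁ + G.edgeSet.ncard / 2 :=
  ⟨h₁.dth_le_dth_add_ncard_edgeSet_div_two h₂, h₂.dth_le_dth_add_ncard_edgeSet_div_two h₁⟩
end

section
/- Every orientation of the star K_{1,n−1} on n ≥ 2 vertices has throttling number exactly n. -/
open Set

/-!
Every arc of an oriented star touches the centre `c`, so each time step colours at most one new
vertex: while `c` is white, every blue vertex is a leaf whose only possible target is `c`; once `c`
is blue, only `c` can force, and it forces its unique white out-neighbour. Hence after `t` steps at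
most `|B| + t` vertices are blue, so `|B| + pt(B) ≥ n` for every zero forcing set `B`, with
equality for `B = V`.
-/

section Forcing

variable {V : Type*} {A : V → V → Prop}

theorem subset_dstep (S : Set V) : S ⊆ dstep A S := subset_union_left

theorem dstep_diff_subsingleton_of_star {c : V} (hstar : ∀ u v, A u v → u = c ∨ v = c)
    (S : Set V) : (dstep A S \ S).Subsingleton := by
  rintro w₁ ⟨⟨hw₁S⟩ | ⟨u₁, hu₁S, hu₁w₁, huniq₁⟩, hw₁S⟩ w₂
    ⟨⟨hw₂S⟩ | ⟨u₂, hu₂S, hu₂w₂, -⟩, hw₂S⟩ <;> try contradiction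
  by_cases hc : c ∈ S
  · have hu₁ : u₁ = c := (hstar _ _ hu₁w₁).resolve_right (by rintro rfl; exact hw₁S hc)
    have hu₂ : u₂ = c := (hstar _ _ hu₂w₂).resolve_right (by rintro rfl; exact hw₂S hc)
    subst hu₁ hu₂
    exact (huniq₁ w₂ hu₂w₂ hw₂S).symm
  · have hw₁ : w₁ = c := (hstar _ _ hu₁w₁).resolve_left (by rintro rfl; exact hc hu₁S)
    have hw₂ : w₂ = c := (hstar _ _ hu₂w₂).resolve_left (by rintro rfl; exact hc hu₂S)
    rw [hw₁, hw₂]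

theorem ncard_dstep_le {S : Set V} (h : (dstep A S \ S).Subsingleton) :
    (dstep A S).ncard ≤ S.ncard + 1 := by
  have : Finite ↑(dstep A S \ S) := h.finite
  calc (dstep A S).ncard = (S ∪ (dstep A S \ S)).ncard := by
        rw [union_sdiff_cancel (subset_dstep S)]
    _ ≤ S.ncard + (dstep A S \ S).ncard := ncard_union_le _ _
    _ ≤ S.ncard + 1 := by gcongr; exact ncard_le_one_iff_subsingleton.2 h

theorem ncard_iterate_dstep_le (h : ∀ S, (dstep A S \ S).Subsingleton) (B : Set V) (t : ℕ) :
    ((dstep A)^[t] B).ncard ≤ B.ncard + t := by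
  induction t with
  | zero => simp
  | succ t ih =>
    rw [Function.iterate_succ_apply']
    have := ncard_dstep_le (h ((dstep A)^[t] B))
    omega

theorem isZFS_univ : IsZFS A (univ : Set V) := ⟨0, rfl⟩

theorem dpt_univ : dpt A (univ : Set V) = 0 :=
  Nat.eq_zero_of_le_zero (Nat.sInf_le rfl)

theorem iterate_dpt_eq_univ {B : Set V} (hB : IsZFS A B) : (dstep A)^[dpt A B] B = univ :=
  Nat.sInf_mem hB

theorem dth_le_card : dth A ≤ Nat.card V :=
  Nat.sInf_le ⟨univ, isZFS_univ, by rw [dpt_univ, ncard_univ, add_zero]⟩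

theorem card_le_ncard_add_dpt (h : ∀ S, (dstep A S \ S).Subsingleton) {B : Set V}
    (hB : IsZFS A B) : Nat.card V ≤ B.ncard + dpt A B := by
  simpa [iterate_dpt_eq_univ hB] using ncard_iterate_dstep_le h B (dpt A B)

theorem dth_eq_card_of_diff_subsingleton (h : ∀ S, (dstep A S \ S).Subsingleton) :
    dth A = Nat.card V := by
  refine le_antisymm dth_le_card ?_
  obtain ⟨B, hB, hk⟩ : dth A ∈ {k | ∃ B : Set V, IsZFS A B ∧ k = B.ncard + dpt A B} :=
    Nat.sInf_mem ⟨_, univ, isZFS_univ, rfl⟩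
  exact hk ▸ card_le_ncard_add_dpt h hB

end Forcing

theorem stmt18_general {V : Type*} [Fintype V] (n : ℕ)
    (hcard : Fintype.card V = n) (c : V) (G : SimpleGraph V)
    (hG : ∀ u v, G.Adj u v ↔ u ≠ v ∧ (u = c ∨ v = c))
    (A : V → V → Prop) (hA : IsOrientation G A) :
    dth A = n := by
  have hstar : ∀ u v, A u v → u = c ∨ v = c := fun u v huv => ((hG u v).1 (hA.1 u v huv)).2
  rw [← hcard, ← Nat.card_eq_fintype_card]
  exact dth_eq_card_of_diff_subsingleton (dstep_diff_subsingleton_of_star hstar)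

/-- Every orientation of the star on `n ≥ 2` vertices has throttling number `n`. -/
theorem stmt18 {V : Type*} [Fintype V] (n : ℕ) (hn : 2 ≤ n)
    (hcard : Fintype.card V = n) (c : V) (G : SimpleGraph V)
    (hG : ∀ u v, G.Adj u v ↔ u ≠ v ∧ (u = c ∨ v = c))
    (A : V → V → Prop) (hA : IsOrientation G A) :
    dth A = n :=
  stmt18_general n hcard c G hG A hA
end
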